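/- arXiv:1708.05511 — 2 statements merged into one kernel-verified Lean document; each statement's English description precedes it below -/
import Mathlib

section
/- For each nonzero rational number u, let g_u(x) = x^6 - 4x^5 + 8(1+u)x^4 - (10+32u)x^3 + 8(1+6u+2u^2)x^2 - 4(1+6u+16u^2)x + 64u^2 + 1. Then the discriminant of g_u is nonzero, i.e., g_u has no repeated roots over the algebraic closure of ℚ. -/
/-!
With `y = x - 1` and `v = 4u` one has `g_u = Q² + 4vy` where `Q = y³ + y² + y + v(y - 1)`.
At a double root, comparing `Q² = -4vy` with `QQ' = -2v` gives `v = -yQ'²` and `Q = 2yQ'`.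
Eliminating `v` shows that `z = 2y` is a root both of the Eisenstein polynomial
`z³ - 4z² - 4z - 2` and of the nonzero rational quadratic `13z² + (12 + 2v)z + 4v + 5`,
which is impossible since the cubic is irreducible over `ℚ`.
-/

open Polynomial

noncomputable def gPoly (u : ℚ) : Polynomial ℚ :=
  X ^ 6 - 4 * X ^ 5 + C (8 * (1 + u)) * X ^ 4 - C (10 + 32 * u) * X ^ 3
    + C (8 * (1 + 6 * u + 2 * u ^ 2)) * X ^ 2
    - C (4 * (1 + 6 * u + 16 * u ^ 2)) * X + C (64 * u ^ 2 + 1)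

theorem Polynomial.natDegree_le_of_irreducible_of_aeval_eq_zero {F A : Type*} [Field F] [Ring A]
    [Nontrivial A] [Algebra F A] {p q : F[X]} (hp : Irreducible p) (hpm : p.Monic) {x : A}
    (hpx : aeval x p = 0) (hq : q ≠ 0) (hqx : aeval x q = 0) : p.natDegree ≤ q.natDegree := by
  rw [minpoly.eq_of_irreducible_of_monic hp hpx hpm]
  exact natDegree_le_natDegree (minpoly.degree_le_of_ne_zero F x hq hqx)

noncomputable def doubleRootCubic : ℚ[X] := X ^ 3 - 4 * X ^ 2 - 4 * X - 2

theorem natDegree_doubleRootCubic : doubleRootCubic.natDegree = 3 := by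
  unfold doubleRootCubic
  compute_degree!

theorem monic_doubleRootCubic : doubleRootCubic.Monic := by
  unfold doubleRootCubic
  monicity!

theorem irreducible_doubleRootCubic : Irreducible doubleRootCubic := by
  refine irreducible_of_degree_le_three_of_not_isRoot (by simp [natDegree_doubleRootCubic]) ?_
  intro r hr
  replace hr : r ^ 3 - 4 * r ^ 2 - 4 * r - 2 = 0 := by simpa [doubleRootCubic] using hr
  obtain ⟨n, rfl⟩ : ∃ n : ℤ, (n : ℚ) = r := by
    refine IsIntegrallyClosed.isIntegral_iff.mp ⟨X ^ 3 - 4 * X ^ 2 - 4 * X - 2, ?_, ?_⟩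
    · monicity!
    · simpa using hr
  have hn : n ^ 3 - 4 * n ^ 2 - 4 * n - 2 = 0 := by exact_mod_cast hr
  have hmod : ∀ m : ZMod 4, m ^ 3 - 4 * m ^ 2 - 4 * m - 2 ≠ 0 := by decide
  exact hmod n (by exact_mod_cast congrArg (Int.cast : ℤ → ZMod 4) hn)

theorem sq_add_mul_double_root_relations {F : Type*} [Field F] (h2 : (2 : F) ≠ 0) {Q Q' y v : F}
    (hv : v ≠ 0) (h0 : Q ^ 2 + 4 * v * y = 0) (h1 : 2 * Q * Q' + 4 * v = 0) :
    v = -y * Q' ^ 2 ∧ Q = 2 * y * Q' := by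
  have h4v : 2 * 2 * v ≠ 0 := by simp [h2, hv]
  have hQQ' : Q * Q' = -2 * v := mul_left_cancel₀ h2 (by linear_combination h1)
  have hv' : v = -y * Q' ^ 2 :=
    mul_left_cancel₀ h4v (by linear_combination Q' ^ 2 * h0 - (Q * Q' - 2 * v) * hQQ')
  have hQ' : Q' ≠ 0 := by
    rintro rfl
    exact hv (by simpa using hv')
  exact ⟨hv', mul_right_cancel₀ hQ' (by linear_combination hQQ' - 2 * hv')⟩

theorem cubic_quadratic_of_double_root {F : Type*} [Field F] {y v : F} (hv : v ≠ 0)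
    (hv' : v = -y * (3 * y ^ 2 + 2 * y + 1 + v) ^ 2)
    (hQ : y ^ 3 + y ^ 2 + y + v * (y - 1) = 2 * y * (3 * y ^ 2 + 2 * y + 1 + v)) :
    (2 * y) ^ 3 - 4 * (2 * y) ^ 2 - 4 * (2 * y) - 2 = 0 ∧
      13 * (2 * y) ^ 2 + (12 + 2 * v) * (2 * y) + (4 * v + 5) = 0 := by
  have hlin : v * (1 + y) = -y * (5 * y ^ 2 + 3 * y + 1) := by linear_combination -hQ
  have hy : y ≠ 0 := by
    rintro rfl
    exact hv (by simpa using hv')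
  have hR : (1 + y) * (3 * y ^ 2 + 2 * y + 1 + v) = -2 * y ^ 3 + 2 * y ^ 2 + 2 * y + 1 := by
    linear_combination hlin
  have hsq : v * (1 + y) ^ 2 = -y * (-2 * y ^ 3 + 2 * y ^ 2 + 2 * y + 1) ^ 2 := by
    rw [← hR]
    linear_combination (1 + y) ^ 2 * hv'
  have hcubic : 4 * y ^ 3 - 8 * y ^ 2 - 4 * y - 1 = 0 := by
    have : y ^ 4 * (4 * y ^ 3 - 8 * y ^ 2 - 4 * y - 1) = 0 := by
      linear_combination hsq - (1 + y) * hlin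
    simpa [hy] using this
  exact ⟨by linear_combination 2 * hcubic, by linear_combination 4 * hlin - 5 * hcubic⟩

theorem gPoly_eq_sq_add (u : ℚ) :
    gPoly u = ((X - 1) * (X ^ 2 - X + 1) + 4 * C u * (X - 2)) ^ 2 + 16 * C u * (X - 1) := by
  simp only [gPoly, C_add, C_mul, C_pow, C_ofNat, C_1]
  ring

section

variable {K : Type*} [Field K] [Algebra ℚ K]

theorem aeval_gPoly (u : ℚ) (y : K) :
    aeval (y + 1) (gPoly u) = (y ^ 3 + y ^ 2 + y + 4 * u * (y - 1)) ^ 2 + 4 * (4 * u) * y := by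
  rw [gPoly_eq_sq_add]
  simp only [map_add, map_mul, map_pow, map_sub, aeval_X, aeval_C, map_ofNat, map_one, eq_ratCast]
  ring

theorem aeval_derivative_gPoly (u : ℚ) (y : K) :
    aeval (y + 1) (derivative (gPoly u)) =
      2 * (y ^ 3 + y ^ 2 + y + 4 * u * (y - 1)) * (3 * y ^ 2 + 2 * y + 1 + 4 * u) + 4 * (4 * u) := by
  rw [gPoly_eq_sq_add]
  simp only [derivative_mul, derivative_pow, derivative_X, derivative_C, derivative_one,
    derivative_ofNat, map_add, map_mul, map_pow, map_sub, aeval_X, aeval_C, map_ofNat, map_one,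
    map_natCast, map_zero, eq_ratCast]
  ring

theorem aeval_cubic_quadratic_of_double_root (u : ℚ) (hu : u ≠ 0) (y : K)
    (h0 : aeval (y + 1) (gPoly u) = 0) (h1 : aeval (y + 1) (derivative (gPoly u)) = 0) :
    aeval (2 * y) doubleRootCubic = 0 ∧
      aeval (2 * y) (C 13 * X ^ 2 + C (12 + 8 * u) * X + C (16 * u + 5)) = 0 := by
  have := charZero_of_injective_algebraMap (algebraMap ℚ K).injective
  rw [aeval_gPoly] at h0
  rw [aeval_derivative_gPoly] at h1
  have hv : (4 * u : K) ≠ 0 := by exact_mod_cast mul_ne_zero four_ne_zero hu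
  obtain ⟨hv', hQ⟩ := sq_add_mul_double_root_relations two_ne_zero hv h0 h1
  obtain ⟨hcubic, hquad⟩ := cubic_quadratic_of_double_root (y := y) hv
    (by linear_combination hv') (by linear_combination hQ)
  simp only [doubleRootCubic, map_add, map_sub, map_mul, map_pow, aeval_X, aeval_C, map_ofNat,
    eq_ratCast]
  exact ⟨hcubic, by linear_combination hquad⟩

theorem aeval_gPoly_ne_zero_or_aeval_derivative_ne_zero (u : ℚ) (hu : u ≠ 0) (a : K) :
    aeval a (gPoly u) ≠ 0 ∨ aeval a (derivative (gPoly u)) ≠ 0 := by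
  by_contra! ⟨h0, h1⟩
  obtain ⟨y, rfl⟩ : ∃ y, a = y + 1 := ⟨a - 1, by ring⟩
  obtain ⟨hcubic, hquad⟩ := aeval_cubic_quadratic_of_double_root u hu y h0 h1
  have hdeg : (C 13 * X ^ 2 + C (12 + 8 * u) * X + C (16 * u + 5)).natDegree = 2 :=
    natDegree_quadratic (by norm_num)
  have := natDegree_le_of_irreducible_of_aeval_eq_zero irreducible_doubleRootCubic
    monic_doubleRootCubic hcubic (ne_zero_of_natDegree_gt (n := 0) (by omega)) hquad
  rw [natDegree_doubleRootCubic, hdeg] at this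
  omega

end

theorem gPoly_separable (u : ℚ) (hu : u ≠ 0) : (gPoly u).Separable :=
  (isCoprime_iff_aeval_ne_zero_of_isAlgClosed ℚ (AlgebraicClosure ℚ) _ _).2
    (aeval_gPoly_ne_zero_or_aeval_derivative_ne_zero u hu)

theorem gPoly_squarefree (u : ℚ) (hu : u ≠ 0) :
    Squarefree ((gPoly u).map (algebraMap ℚ (AlgebraicClosure ℚ))) :=
  (gPoly_separable u hu).map.squarefree
end

section
/- There are no polynomials over any field k of char ≠ 2 of the form a_0 = x^3+r_2x^2+r_1x+r_0, a_1 = l_1x^2+c_1x+k_1, a_2 = l_2x+k_2, a_3 = l_3x^2+c_3x+k_3, h_1 = (2/l_1)x^2+b_1x+b_0 with l_1, l_2, l_3 ≠ 0, such that (p_4·h_1 - q_3) - 2·a_0·q_4 = 0, where p_j, q_j are the convergents built from the partial quotients (a_1, a_2, a_3, a_2, a_1, 2a_0) via p_{-2}=0, p_{-1}=1, q_{-2}=1, q_{-1}=0 and the standard recurrences. -/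
open Polynomial

/-- The impossible partition (g = 2, N = 11, m = 6, degrees 2+1+2+1+2):
for the palindromic partial quotients `(a₁, a₂, a₃, a₂, a₁, 2a₀)` with the indicated
shapes, the quantity `J = (p₄h₁ - q₃) - 2a₀q₄` can never vanish. -/
theorem impossible_partition (kk : Type*) [Field kk] (hchar : (2 : kk) ≠ 0)
    (r0 r1 r2 l1 c1 k1 l2 k2 l3 c3 k3 b0 b1 : kk)
    (hl1 : l1 ≠ 0) (hl2 : l2 ≠ 0) (hl3 : l3 ≠ 0)
    (a0 a1 a2 a3 h1 p0 p1 p2 p3 p4 q0 q1 q2 q3 q4 : Polynomial kk)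
    (ha0 : a0 = X ^ 3 + C r2 * X ^ 2 + C r1 * X + C r0)
    (ha1 : a1 = C l1 * X ^ 2 + C c1 * X + C k1)
    (ha2 : a2 = C l2 * X + C k2)
    (ha3 : a3 = C l3 * X ^ 2 + C c3 * X + C k3)
    (hh1 : h1 = C (2 / l1) * X ^ 2 + C b1 * X + C b0)
    (hp0 : p0 = a1) (hp1 : p1 = a2 * a1 + 1)
    (hp2 : p2 = a3 * p1 + p0) (hp3 : p3 = a2 * p2 + p1) (hp4 : p4 = a1 * p3 + p2)
    (hq0 : q0 = 1) (hq1 : q1 = a2)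
    (hq2 : q2 = a3 * q1 + q0) (hq3 : q3 = a2 * q2 + q1) (hq4 : q4 = a1 * q3 + q2) :
    (p4 * h1 - q3) - 2 * a0 * q4 ≠ 0 := by
  -- The key observation: the coefficient of `X ^ 10` of `J` is `(2/l1) * l1^2 * l2^2 * l3 ≠ 0`,
  -- since `p4 * h1` has degree 10 while `q3` and `2 * a0 * q4` have degree at most 9.
  -- Degree bounds
  have da0 : a0.natDegree ≤ 3 := by subst ha0; compute_degree
  have da1 : a1.natDegree ≤ 2 := by subst ha1; compute_degree
  have da2 : a2.natDegree ≤ 1 := by subst ha2; compute_degree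
  have da3 : a3.natDegree ≤ 2 := by subst ha3; compute_degree
  have dh1 : h1.natDegree ≤ 2 := by subst hh1; compute_degree
  have dp0 : p0.natDegree ≤ 2 := hp0 ▸ da1
  have dp1 : p1.natDegree ≤ 3 := by
    subst hp1
    exact natDegree_add_le_of_degree_le (natDegree_mul_le_of_le da2 da1) (by simp)
  have dp2 : p2.natDegree ≤ 5 := by
    subst hp2
    exact natDegree_add_le_of_degree_le (natDegree_mul_le_of_le da3 dp1) (dp0.trans (by norm_num))
  have dp3 : p3.natDegree ≤ 6 := by
    subst hp3
    exact natDegree_add_le_of_degree_le (natDegree_mul_le_of_le da2 dp2) (dp1.trans (by norm_num))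
  have dq1 : q1.natDegree ≤ 1 := hq1 ▸ da2
  have dq2 : q2.natDegree ≤ 3 := by
    subst hq2
    exact natDegree_add_le_of_degree_le
      ((natDegree_mul_le_of_le da3 dq1)) (by simp [hq0])
  have dq3 : q3.natDegree ≤ 4 := by
    subst hq3
    exact natDegree_add_le_of_degree_le (natDegree_mul_le_of_le da2 dq2) (dq1.trans (by norm_num))
  have dq4 : q4.natDegree ≤ 6 := by
    subst hq4
    exact natDegree_add_le_of_degree_le (natDegree_mul_le_of_le da1 dq3)
      (dq2.trans (by norm_num))
  -- top coefficients
  have ca1 : a1.coeff 2 = l1 := by subst ha1; simp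
  have ca2 : a2.coeff 1 = l2 := by subst ha2; simp
  have ca3 : a3.coeff 2 = l3 := by subst ha3; simp
  have ch1 : h1.coeff 2 = 2 / l1 := by subst hh1; simp
  have cp1 : p1.coeff 3 = l2 * l1 := by
    have : (a2 * a1).coeff 3 = l2 * l1 := by
      have := coeff_mul_add_eq_of_natDegree_le (f := a2) (g := a1) da2 da1
      simpa [ca2, ca1] using this
    rw [hp1, coeff_add, this]
    simp [Polynomial.coeff_one]
  have cp2 : p2.coeff 5 = l3 * (l2 * l1) := by
    have h1' : (a3 * p1).coeff 5 = l3 * (l2 * l1) := by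
      have := coeff_mul_add_eq_of_natDegree_le (f := a3) (g := p1) da3 dp1
      simpa [ca3, cp1] using this
    have h2' : p0.coeff 5 = 0 := coeff_eq_zero_of_natDegree_lt (lt_of_le_of_lt dp0 (by norm_num))
    rw [hp2, coeff_add, h1', h2', add_zero]
  have cp3 : p3.coeff 6 = l2 * (l3 * (l2 * l1)) := by
    have h1' : (a2 * p2).coeff 6 = l2 * (l3 * (l2 * l1)) := by
      have := coeff_mul_add_eq_of_natDegree_le (f := a2) (g := p2) da2 dp2
      simpa [ca2, cp2] using this
    have h2' : p1.coeff 6 = 0 := coeff_eq_zero_of_natDegree_lt (lt_of_le_of_lt dp1 (by norm_num))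
    rw [hp3, coeff_add, h1', h2', add_zero]
  have cp4 : p4.coeff 8 = l1 * (l2 * (l3 * (l2 * l1))) := by
    have h1' : (a1 * p3).coeff 8 = l1 * (l2 * (l3 * (l2 * l1))) := by
      have := coeff_mul_add_eq_of_natDegree_le (f := a1) (g := p3) da1 dp3
      simpa [ca1, cp3] using this
    have h2' : p2.coeff 8 = 0 := coeff_eq_zero_of_natDegree_lt (lt_of_le_of_lt dp2 (by norm_num))
    rw [hp4, coeff_add, h1', h2', add_zero]
  -- coeff 10 of p4 * h1
  have dp4 : p4.natDegree ≤ 8 := by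
    subst hp4
    exact natDegree_add_le_of_degree_le (natDegree_mul_le_of_le da1 dp3)
      (dp2.trans (by norm_num))
  have cmain : (p4 * h1).coeff 10 = l1 * (l2 * (l3 * (l2 * l1))) * (2 / l1) := by
    have := coeff_mul_add_eq_of_natDegree_le (f := p4) (g := h1) dp4 dh1
    simpa [cp4, ch1] using this
  -- coeff 10 of the remainder terms is zero
  have cq3 : q3.coeff 10 = 0 := coeff_eq_zero_of_natDegree_lt (lt_of_le_of_lt dq3 (by norm_num))
  have ctail : (2 * a0 * q4).coeff 10 = 0 := by
    refine coeff_eq_zero_of_natDegree_lt (lt_of_le_of_lt ?_ (show (9:ℕ) < 10 by norm_num))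
    calc (2 * a0 * q4).natDegree ≤ (2 * a0).natDegree + q4.natDegree := natDegree_mul_le
      _ ≤ (0 + 3) + 6 := by
          refine add_le_add (le_trans natDegree_mul_le (add_le_add ?_ da0)) dq4
          simp [Polynomial.natDegree_ofNat]
      _ = 9 := by norm_num
  intro h
  have h10 : ((p4 * h1 - q3) - 2 * a0 * q4).coeff 10 = 0 := by rw [h]; simp
  rw [coeff_sub, coeff_sub, cmain, cq3, ctail, sub_zero, sub_zero] at h10
  have : l1 * (l2 * (l3 * (l2 * l1))) * (2 / l1) = 2 * l1 * l2 ^ 2 * l3 := by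
    field_simp
  rw [this] at h10
  exact (mul_ne_zero (mul_ne_zero (mul_ne_zero hchar hl1) (pow_ne_zero 2 hl2)) hl3) h10
end
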